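/- arXiv:2506.18788 — 4 statements merged into one kernel-verified Lean document; each statement's English description precedes it below -/
import Mathlib

section
/- Let L be a finite lattice and let Ch(L) be its chain lattice: the elements are chains C₀ < C₁ < … < C_r in L with C₀ = 0_L and C_r = 1_L, ordered by refinement, together with an adjoined top element 1_Ch. Then for any chain C_• ∈ Ch(L) of length r, -μ_{Ch(L)}(C_•, 1_Ch) = Π_{i=1}^{r} (-μ_L(C_{i-1}, C_i)), where μ denotes the Möbius function of the respective lattice. -/
open scoped Classical

namespace Stmt12

/-- A maximal-endpoint chain in a bounded lattice `L`: a chain (as a finite set of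
pairwise comparable elements) containing `⊥` and `⊤`. -/
def IsFullChain {L : Type} [Lattice L] [BoundedOrder L] (c : Finset L) : Prop :=
  IsChain (· ≤ ·) (↑c : Set L) ∧ (⊥ : L) ∈ c ∧ (⊤ : L) ∈ c

/-- The chain lattice of `L`: chains from `⊥` to `⊤`, ordered by refinement
(inclusion), with an adjoined maximum `⊤`. -/
abbrev ChainLat (L : Type) [Lattice L] [BoundedOrder L] :=
  WithTop {c : Finset L // IsFullChain c}

instance {L : Type} [Fintype L] [Lattice L] [BoundedOrder L] :
    Finite (ChainLat L) :=
  inferInstanceAs (Finite (Option _))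

noncomputable instance {L : Type} [Fintype L] [Lattice L] [BoundedOrder L] :
    Fintype (ChainLat L) :=
  Fintype.ofFinite _

abbrev Sub (L : Type) [Lattice L] [BoundedOrder L] := {c : Finset L // IsFullChain c}

set_option linter.unusedSectionVars false

section
variable {L : Type} [Fintype L] [Lattice L] [BoundedOrder L]

/-- chains in the open interval (x,z) -/
noncomputable def oc (x z : L) : Finset (Finset L) :=
  Finset.univ.filter (fun S => (∀ y ∈ S, x < y ∧ y < z) ∧ IsChain (· ≤ ·) (↑S : Set L))

lemma mem_oc {x z : L} {S : Finset L} :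
    S ∈ oc x z ↔ (∀ y ∈ S, x < y ∧ y < z) ∧ IsChain (· ≤ ·) (↑S : Set L) := by
  simp [oc]

lemma chain_sup_mem {S : Finset L} (hS : IsChain (· ≤ ·) (↑S : Set L)) (h : S.Nonempty) :
    S.sup' h id ∈ S := by
  have := Finset.sup'_mem (↑S : Set L) ?_ S h id (fun i hi => hi)
  · exact this
  · intro a ha b hb
    rcases eq_or_ne a b with rfl | hab
    · simpa using ha
    · rcases hS ha hb hab with h1 | h1
      · simpa [sup_eq_right.2 h1] using hb
      · simpa [sup_eq_left.2 h1] using ha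

omit [Fintype L] [BoundedOrder L] in
lemma sup'_insert_of_le {m : L} {S : Finset L} (hle : ∀ y ∈ S, y ≤ m)
    (h : (insert m S).Nonempty) : (insert m S).sup' h id = m := by
  refine le_antisymm (Finset.sup'_le _ _ ?_) (Finset.le_sup' id (Finset.mem_insert_self _ _))
  intro b hb'
  rcases Finset.mem_insert.1 hb' with rfl | hb'
  · exact le_rfl
  · exact hle _ hb'

lemma hall (μL : L → L → ℤ) (hL1 : ∀ x : L, μL x x = 1)
    (hLrec : ∀ x z : L, x < z →
      ∑ y ∈ Finset.univ.filter (fun y : L => x ≤ y ∧ y ≤ z), μL x y = 0) :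
    ∀ z x : L, x < z → ∑ S ∈ oc x z, (-1 : ℤ) ^ S.card = -μL x z := by
  intro z
  induction z using WellFoundedLT.induction with
  | _ z IH =>
  intro x hxz
  -- Möbius recursion rearranged:  -μL x z = 1 + ∑_{x<y<z} μL x y
  have hmu : -μL x z = 1 + ∑ y ∈ Finset.univ.filter (fun y : L => x < y ∧ y < z), μL x y := by
    have h0 := hLrec x z hxz
    have hz : z ∈ Finset.univ.filter (fun y : L => x ≤ y ∧ y ≤ z) := by
      simp [le_of_lt hxz]
    rw [← Finset.add_sum_erase _ _ hz] at h0
    have hx : x ∈ (Finset.univ.filter (fun y : L => x ≤ y ∧ y ≤ z)).erase z := by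
      simp [le_of_lt hxz, (ne_of_lt hxz)]
    rw [← Finset.add_sum_erase _ _ hx, hL1] at h0
    have hset : ((Finset.univ.filter (fun y : L => x ≤ y ∧ y ≤ z)).erase z).erase x
        = Finset.univ.filter (fun y : L => x < y ∧ y < z) := by
      ext y
      simp only [Finset.mem_erase, Finset.mem_filter, Finset.mem_univ, true_and]
      constructor
      · rintro ⟨hyx, hyz, h1, h2⟩
        exact ⟨lt_of_le_of_ne h1 (Ne.symm hyx), lt_of_le_of_ne h2 hyz⟩
      · rintro ⟨h1, h2⟩
        exact ⟨(ne_of_gt h1), (ne_of_lt h2), le_of_lt h1, le_of_lt h2⟩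
    rw [hset] at h0
    linarith
  -- split chain sum into empty / nonempty
  have hsplit := Finset.sum_filter_add_sum_filter_not (oc x z) (fun S => S = ∅)
      (fun S => (-1 : ℤ) ^ S.card)
  have hempty : (oc x z).filter (fun S => S = ∅) = {∅} := by
    ext S
    simp only [Finset.mem_filter, Finset.mem_singleton]
    constructor
    · rintro ⟨-, h⟩; exact h
    · rintro rfl
      refine ⟨mem_oc.2 ⟨by simp, by simp⟩, rfl⟩
  -- the nonempty part via max decomposition
  have hne : ∑ S ∈ (oc x z).filter (fun S => ¬S = ∅), (-1 : ℤ) ^ S.card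
      = ∑ p ∈ (Finset.univ.filter (fun y : L => x < y ∧ y < z)).sigma (fun y => oc x y),
          (-(-1 : ℤ) ^ (p.2 : Finset L).card) := by
    refine Finset.sum_bij' (fun S hS => ?_) (fun p hp => insert p.1 p.2) ?_ ?_ ?_ ?_ ?_
    · -- decompose : S ↦ ⟨max S, S.erase (max S)⟩
      have h1 : S.Nonempty := Finset.nonempty_iff_ne_empty.2 (Finset.mem_filter.1 hS).2
      exact ⟨S.sup' h1 id, S.erase (S.sup' h1 id)⟩
    · -- lands in sigma
      intro S hS
      obtain ⟨hS1, hS2⟩ := Finset.mem_filter.1 hS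
      obtain ⟨hb, hch⟩ := mem_oc.1 hS1
      have h1 : S.Nonempty := Finset.nonempty_iff_ne_empty.2 hS2
      have hm : S.sup' h1 id ∈ S := chain_sup_mem hch h1
      refine Finset.mem_sigma.2 ⟨Finset.mem_filter.2 ⟨Finset.mem_univ _, hb _ hm⟩, ?_⟩
      refine mem_oc.2 ⟨?_, hch.mono (by simp [Finset.erase_subset, Finset.coe_subset])⟩
      intro y hy
      obtain ⟨hy1, hy2⟩ := Finset.mem_erase.1 hy
      refine ⟨(hb _ hy2).1, lt_of_le_of_ne ?_ hy1⟩
      exact Finset.le_sup' id hy2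
    · -- insert lands in filtered oc
      rintro ⟨m, S⟩ hp
      obtain ⟨hm, hS⟩ := Finset.mem_sigma.1 hp
      simp only [Finset.mem_filter, Finset.mem_univ, true_and] at hm
      obtain ⟨hb, hch⟩ := mem_oc.1 hS
      refine Finset.mem_filter.2 ⟨mem_oc.2 ⟨?_, ?_⟩, by simp⟩
      · intro y hy
        rcases Finset.mem_insert.1 hy with rfl | hy
        · exact hm
        · exact ⟨(hb _ hy).1, lt_trans (hb _ hy).2 hm.2⟩
      · rw [Finset.coe_insert]
        exact hch.insert (fun b hb' _ => Or.inr (le_of_lt (hb _ hb').2))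
    · -- left inverse
      intro S hS
      have h1 : S.Nonempty := Finset.nonempty_iff_ne_empty.2 (Finset.mem_filter.1 hS).2
      have hm : S.sup' h1 id ∈ S :=
        chain_sup_mem (mem_oc.1 (Finset.mem_filter.1 hS).1).2 h1
      exact Finset.insert_erase hm
    · -- right inverse
      rintro ⟨m, S⟩ hp
      obtain ⟨hm, hS⟩ := Finset.mem_sigma.1 hp
      simp only [Finset.mem_filter, Finset.mem_univ, true_and] at hm
      obtain ⟨hb, hch⟩ := mem_oc.1 hS
      have hmS : m ∉ S := fun h => lt_irrefl m (hb _ h).2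
      have hle : ∀ y ∈ S, y ≤ m := fun y hy => le_of_lt (hb _ hy).2
      refine Sigma.ext (sup'_insert_of_le hle (Finset.insert_nonempty _ _)) (heq_of_eq ?_)
      show (insert m S).erase ((insert m S).sup' (Finset.insert_nonempty _ _) id) = S
      rw [sup'_insert_of_le hle]
      exact Finset.erase_insert hmS
    · -- values match
      intro S hS
      have h1 : S.Nonempty := Finset.nonempty_iff_ne_empty.2 (Finset.mem_filter.1 hS).2
      have hm : S.sup' h1 id ∈ S :=
        chain_sup_mem (mem_oc.1 (Finset.mem_filter.1 hS).1).2 h1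
      have hc : (S.erase (S.sup' h1 id)).card + 1 = S.card := Finset.card_erase_add_one hm
      simp only [← hc, pow_succ]
      ring
  have hstep : ∑ p ∈ (Finset.univ.filter (fun y : L => x < y ∧ y < z)).sigma (fun y => oc x y),
        (-(-1 : ℤ) ^ (p.2 : Finset L).card)
      = ∑ y ∈ Finset.univ.filter (fun y : L => x < y ∧ y < z), μL x y := by
    rw [← Finset.sum_sigma' (Finset.univ.filter (fun y : L => x < y ∧ y < z))
      (fun y => oc x y) (fun y S => -(-1 : ℤ) ^ S.card)]
    refine Finset.sum_congr rfl ?_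
    intro y hy
    simp only [Finset.mem_filter, Finset.mem_univ, true_and] at hy
    rw [Finset.sum_neg_distrib, IH y hy.2 x hy.1]
    ring
  have h0 : ∑ S ∈ (oc x z).filter (fun S => S = ∅), (-1 : ℤ) ^ S.card = 1 := by
    rw [hempty]; simp
  rw [← hsplit, h0, hne, hstep, hmu]


lemma filter_le_le (c d : Sub L) :
    Finset.univ.filter (fun y : ChainLat L => WithTop.some c ≤ y ∧ y ≤ WithTop.some d)
      = Finset.image WithTop.some (Finset.univ.filter (fun e : Sub L => c ≤ e ∧ e ≤ d)) := by
  ext y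
  simp only [Finset.mem_filter, Finset.mem_univ, true_and, Finset.mem_image]
  constructor
  · rintro ⟨h1, h2⟩
    obtain ⟨e, rfl, hed⟩ := WithTop.le_coe_iff.1 h2
    exact ⟨e, ⟨WithTop.coe_le_coe.1 h1, hed⟩, rfl⟩
  · rintro ⟨e, ⟨h1, h2⟩, rfl⟩
    exact ⟨WithTop.coe_le_coe.2 h1, WithTop.coe_le_coe.2 h2⟩

lemma full_union {c : Sub L} {d : Sub L} {S : Finset L} (hS : S ⊆ d.1 \ c.1)
    (hcd : c.1 ⊆ d.1) : IsFullChain (c.1 ∪ S) := by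
  have hsub : c.1 ∪ S ⊆ d.1 := by
    refine Finset.union_subset hcd (hS.trans ?_)
    exact Finset.sdiff_subset
  refine ⟨d.2.1.mono ?_, Finset.mem_union_left _ c.2.2.1, Finset.mem_union_left _ c.2.2.2⟩
  exact_mod_cast hsub

lemma disj_of_sub {c d : Sub L} {S : Finset L} (hS : S ⊆ d.1 \ c.1) :
    Disjoint c.1 S := by
  rw [Finset.disjoint_right]
  intro a haS hac
  exact (Finset.mem_sdiff.1 (hS haS)).2 hac

lemma bool_mu (μC : ChainLat L → ChainLat L → ℤ)
    (hC1 : ∀ x : ChainLat L, μC x x = 1)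
    (hCrec : ∀ x z : ChainLat L, x < z →
      ∑ y ∈ Finset.univ.filter (fun y : ChainLat L => x ≤ y ∧ y ≤ z), μC x y = 0)
    (c : Sub L) :
    ∀ n : ℕ, ∀ d : Sub L, c.1 ⊆ d.1 → (d.1 \ c.1).card = n →
      μC (WithTop.some c) (WithTop.some d) = (-1 : ℤ) ^ n := by
  intro n
  induction n using Nat.strong_induction_on with
  | _ n IH =>
  intro d hsub hcard
  rcases Nat.eq_zero_or_pos n with rfl | hn
  · have h1 : d.1 ⊆ c.1 := Finset.sdiff_eq_empty_iff_subset.1 (Finset.card_eq_zero.1 hcard)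
    have : d = c := Subtype.ext (Finset.Subset.antisymm h1 hsub)
    rw [this, hC1]
    simp
  · have hTne : d.1 \ c.1 ≠ ∅ := by
      intro h
      rw [h] at hcard
      simp at hcard
      omega
    have hne : c ≠ d := by
      intro h
      rw [h] at hcard
      simp at hcard
      omega
    have hlt : (WithTop.some c : ChainLat L) < WithTop.some d := by
      rw [WithTop.coe_lt_coe]
      exact lt_of_le_of_ne (Subtype.coe_le_coe.1 (Finset.le_iff_subset.2 hsub)) hne
    have h0 := hCrec _ _ hlt
    rw [filter_le_le, Finset.sum_image (fun x _ y _ h => WithTop.coe_injective h)] at h0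
    -- reindex over the powerset of T := d.1 \ c.1
    have hre : ∑ e ∈ Finset.univ.filter (fun e : Sub L => c ≤ e ∧ e ≤ d),
          μC (WithTop.some c) (WithTop.some e)
        = ∑ S ∈ (d.1 \ c.1).powerset,
            (if h : IsFullChain (c.1 ∪ S) then μC (WithTop.some c) (WithTop.some ⟨c.1 ∪ S, h⟩)
             else 0) := by
      refine Finset.sum_bij' (fun e _ => e.1 \ c.1)
        (fun S hS => ⟨c.1 ∪ S, full_union (Finset.mem_powerset.1 hS) hsub⟩) ?_ ?_ ?_ ?_ ?_
      · intro e he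
        simp only [Finset.mem_filter, Finset.mem_univ, true_and] at he
        exact Finset.mem_powerset.2
          (Finset.sdiff_subset_sdiff (Finset.le_iff_subset.1 he.2) Finset.Subset.rfl)
      · intro S hS
        simp only [Finset.mem_filter, Finset.mem_univ, true_and]
        constructor
        · exact Finset.le_iff_subset.2 Finset.subset_union_left
        · refine Finset.le_iff_subset.2 (Finset.union_subset hsub ?_)
          exact (Finset.mem_powerset.1 hS).trans Finset.sdiff_subset
      · intro e he
        simp only [Finset.mem_filter, Finset.mem_univ, true_and] at he
        exact Subtype.ext (Finset.union_sdiff_of_subset (Finset.le_iff_subset.1 he.1))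
      · intro S hS
        exact Finset.union_sdiff_cancel_left (disj_of_sub (Finset.mem_powerset.1 hS))
      · intro e he
        simp only [Finset.mem_filter, Finset.mem_univ, true_and] at he
        have hu : c.1 ∪ (e.1 \ c.1) = e.1 :=
          Finset.union_sdiff_of_subset (Finset.le_iff_subset.1 he.1)
        have hfull : IsFullChain (c.1 ∪ (e.1 \ c.1)) := by rw [hu]; exact e.2
        rw [dif_pos hfull]
        congr 1
        exact congrArg WithTop.some (Subtype.ext hu.symm)
    rw [hre] at h0
    -- split off S = T
    have hTmem : d.1 \ c.1 ∈ (d.1 \ c.1).powerset := Finset.mem_powerset_self _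
    rw [← Finset.add_sum_erase _ _ hTmem] at h0
    have hTfull : IsFullChain (c.1 ∪ (d.1 \ c.1)) := full_union Finset.Subset.rfl hsub
    have hTd : (⟨c.1 ∪ (d.1 \ c.1), hTfull⟩ : Sub L) = d :=
      Subtype.ext (Finset.union_sdiff_of_subset hsub)
    rw [dif_pos hTfull, hTd] at h0
    have hrest : ∑ S ∈ ((d.1 \ c.1).powerset).erase (d.1 \ c.1),
          (if h : IsFullChain (c.1 ∪ S) then μC (WithTop.some c) (WithTop.some ⟨c.1 ∪ S, h⟩)
           else 0)
        = ∑ S ∈ ((d.1 \ c.1).powerset).erase (d.1 \ c.1), (-1 : ℤ) ^ S.card := by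
      refine Finset.sum_congr rfl ?_
      intro S hS
      obtain ⟨hSne, hSp⟩ := Finset.mem_erase.1 hS
      have hSsub := Finset.mem_powerset.1 hSp
      have hfull : IsFullChain (c.1 ∪ S) := full_union hSsub hsub
      rw [dif_pos hfull]
      have hcards : ((⟨c.1 ∪ S, hfull⟩ : Sub L).1 \ c.1).card = S.card := by
        simp only
        rw [Finset.union_sdiff_cancel_left (disj_of_sub hSsub)]
      refine IH S.card ?_ ⟨c.1 ∪ S, hfull⟩ Finset.subset_union_left hcards
      rw [← hcard]
      exact Finset.card_lt_card (lt_of_le_of_ne hSsub hSne)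
    rw [hrest] at h0
    have hps : ∑ S ∈ ((d.1 \ c.1).powerset).erase (d.1 \ c.1), (-1 : ℤ) ^ S.card
        = -(-1 : ℤ) ^ n := by
      have := Finset.sum_powerset_neg_one_pow_card (x := d.1 \ c.1)
      rw [← Finset.add_sum_erase _ _ hTmem, if_neg hTne, hcard] at this
      linarith
    rw [hps] at h0
    linarith


variable {r : ℕ} {f : Fin (r + 1) → L} (hmono : StrictMono f)
  (hf0 : f 0 = ⊥) (hfr : f (Fin.last r) = ⊤)
  {c : Sub L} (hc : (c : Finset L) = Finset.image f Finset.univ)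

include hc in
lemma mem_c_iff {x : L} : x ∈ c.1 ↔ ∃ j, f j = x := by
  rw [hc]; simp [Finset.mem_image]

lemma fin_succ_le {i i' : Fin r} (h : i < i') : (i.succ : Fin (r + 1)) ≤ i'.castSucc := by
  rw [Fin.le_def]
  rw [Fin.lt_def] at h
  simp only [Fin.val_succ, Fin.coe_castSucc] at *
  omega

lemma fin_tricho (j : Fin (r + 1)) (i : Fin r) : j ≤ i.castSucc ∨ i.succ ≤ j := by
  rw [Fin.le_def, Fin.le_def]
  simp only [Fin.val_succ, Fin.coe_castSucc]
  omega

include hmono hc in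
lemma not_in_c {i : Fin r} {x : L} (h1 : f i.castSucc < x) (h2 : x < f i.succ) :
    x ∉ c.1 := by
  rw [mem_c_iff hc]
  rintro ⟨j, rfl⟩
  have ha : i.castSucc < j := hmono.lt_iff_lt.1 h1
  have hb : j < i.succ := hmono.lt_iff_lt.1 h2
  rw [Fin.lt_def] at ha hb
  simp only [Fin.val_succ, Fin.coe_castSucc] at ha hb
  omega

include hmono in
lemma interval_disj {i i' : Fin r} (h : i ≠ i') {x : L}
    (h1 : f i.castSucc < x) (h2 : x < f i.succ)
    (h3 : f i'.castSucc < x) (h4 : x < f i'.succ) : False := by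
  rcases lt_or_gt_of_ne h with hlt | hlt
  · exact absurd (lt_trans (lt_of_lt_of_le h2 (hmono.monotone (fin_succ_le hlt))) h3)
      (lt_irrefl x)
  · exact absurd (lt_trans (lt_of_lt_of_le h4 (hmono.monotone (fin_succ_le hlt))) h1)
      (lt_irrefl x)

include hmono hf0 hfr hc in
lemma exists_interval {x : L} (hx : x ∉ c.1) (hcomp : ∀ j, x ≤ f j ∨ f j ≤ x) :
    ∃ i : Fin r, f i.castSucc < x ∧ x < f i.succ := by
  set A := Finset.univ.filter (fun j : Fin (r + 1) => f j < x) with hA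
  have h0A : (0 : Fin (r + 1)) ∈ A := by
    rw [hA, Finset.mem_filter]
    refine ⟨Finset.mem_univ _, ?_⟩
    rw [hf0]
    refine lt_of_le_of_ne bot_le ?_
    intro hbot
    exact hx ((mem_c_iff hc).2 ⟨0, by rw [hf0, hbot]⟩)
  have hAne : A.Nonempty := ⟨0, h0A⟩
  set m := A.max' hAne with hm
  have hmA : m ∈ A := A.max'_mem hAne
  have hfm : f m < x := (Finset.mem_filter.1 hmA).2
  have hmr : m.val < r := by
    rcases Nat.lt_or_ge m.val r with h | h
    · exact h
    · exfalso
      have : m = Fin.last r := Fin.ext (le_antisymm (Nat.lt_succ_iff.1 m.isLt) h)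
      rw [this, hfr] at hfm
      exact not_top_lt hfm
  refine ⟨⟨m.val, hmr⟩, ?_, ?_⟩
  · have : (⟨m.val, hmr⟩ : Fin r).castSucc = m := Fin.ext rfl
    rw [this]; exact hfm
  · have hsuccval : ((⟨m.val, hmr⟩ : Fin r).succ : Fin (r + 1)).val = m.val + 1 := rfl
    have hnotA : (⟨m.val, hmr⟩ : Fin r).succ ∉ A := by
      intro hmem
      have := A.le_max' _ hmem
      rw [← hm] at this
      rw [Fin.le_def, hsuccval] at this
      omega
    have hnlt : ¬ f ((⟨m.val, hmr⟩ : Fin r).succ) < x := by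
      intro h; exact hnotA (Finset.mem_filter.2 ⟨Finset.mem_univ _, h⟩)
    have hne' : x ≠ f ((⟨m.val, hmr⟩ : Fin r).succ) := by
      intro h
      exact hx ((mem_c_iff hc).2 ⟨_, h.symm⟩)
    rcases hcomp ((⟨m.val, hmr⟩ : Fin r).succ) with h | h
    · exact lt_of_le_of_ne h hne'
    · exact absurd (lt_of_le_of_ne h (Ne.symm hne')) hnlt

include hmono hc in
lemma chain_union {g : Fin r → Finset L}
    (hg : ∀ i, g i ∈ oc (f i.castSucc) (f i.succ)) :
    IsFullChain (c.1 ∪ Finset.univ.biUnion g) := by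
  have hb : ∀ i : Fin r, ∀ b ∈ g i, f i.castSucc < b ∧ b < f i.succ :=
    fun i b hbmem => (mem_oc.1 (hg i)).1 b hbmem
  have hcb : ∀ (j : Fin (r + 1)) (i : Fin r), ∀ b ∈ g i, f j ≤ b ∨ b ≤ f j := by
    intro j i b hbm
    rcases fin_tricho j i with h | h
    · exact Or.inl (le_of_lt (lt_of_le_of_lt (hmono.monotone h) (hb i b hbm).1))
    · exact Or.inr (le_of_lt (lt_of_lt_of_le (hb i b hbm).2 (hmono.monotone h)))
  constructor
  · intro a ha b hbmem hne
    simp only [Finset.coe_union, Set.mem_union, Finset.mem_coe, Finset.mem_biUnion,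
      Finset.mem_univ, true_and] at ha hbmem
    rcases ha with ha | ⟨ia, ha⟩
    · rcases hbmem with hbc | ⟨ib, hbm⟩
      · exact c.2.1 ha hbc hne
      · obtain ⟨j, rfl⟩ := (mem_c_iff hc).1 ha
        exact hcb j ib b hbm
    · rcases hbmem with hbc | ⟨ib, hbm⟩
      · obtain ⟨j, rfl⟩ := (mem_c_iff hc).1 hbc
        exact (hcb j ia a ha).symm
      · rcases eq_or_ne ia ib with rfl | hne'
        · exact (mem_oc.1 (hg ia)).2 ha hbm hne
        · rcases lt_or_gt_of_ne hne' with h | h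
          · exact Or.inl (le_of_lt (lt_trans (lt_of_lt_of_le (hb ia a ha).2
              (hmono.monotone (fin_succ_le h))) (hb ib b hbm).1))
          · exact Or.inr (le_of_lt (lt_trans (lt_of_lt_of_le (hb ib b hbm).2
              (hmono.monotone (fin_succ_le h))) (hb ia a ha).1))
  · exact ⟨Finset.mem_union_left _ c.2.2.1, Finset.mem_union_left _ c.2.2.2⟩

include hmono in
lemma gdef_mem (e : Sub L) (i : Fin r) :
    e.1.filter (fun x => f i.castSucc < x ∧ x < f i.succ) ∈ oc (f i.castSucc) (f i.succ) := by
  refine mem_oc.2 ⟨?_, ?_⟩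
  · intro y hy
    exact (Finset.mem_filter.1 hy).2
  · refine e.2.1.mono ?_
    exact_mod_cast Finset.filter_subset _ _

include hmono hf0 hfr hc in
lemma recover (e : Sub L) (hce : c.1 ⊆ e.1) :
    c.1 ∪ Finset.univ.biUnion
        (fun i : Fin r => e.1.filter (fun x => f i.castSucc < x ∧ x < f i.succ)) = e.1 := by
  apply Finset.Subset.antisymm
  · refine Finset.union_subset hce ?_
    intro x hx
    simp only [Finset.mem_biUnion, Finset.mem_univ, true_and] at hx
    obtain ⟨i, hi⟩ := hx
    exact (Finset.mem_filter.1 hi).1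
  · intro x hx
    by_cases hxc : x ∈ c.1
    · exact Finset.mem_union_left _ hxc
    · have hcomp : ∀ j, x ≤ f j ∨ f j ≤ x := by
        intro j
        have hfj : f j ∈ e.1 := hce ((mem_c_iff hc).2 ⟨j, rfl⟩)
        have hne : x ≠ f j := fun h => hxc ((mem_c_iff hc).2 ⟨j, h.symm⟩)
        exact e.2.1 (Finset.mem_coe.2 hx) (Finset.mem_coe.2 hfj) hne
      obtain ⟨i, h1, h2⟩ := exists_interval hmono hf0 hfr hc hxc hcomp
      refine Finset.mem_union_right _ ?_
      simp only [Finset.mem_biUnion, Finset.mem_univ, true_and]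
      exact ⟨i, Finset.mem_filter.2 ⟨hx, h1, h2⟩⟩

include hmono hf0 hfr hc in
lemma stepB :
    ∑ g ∈ Fintype.piFinset (fun i : Fin r => oc (f i.castSucc) (f i.succ)),
        ∏ i : Fin r, (-1 : ℤ) ^ (g i).card
      = ∑ e ∈ Finset.univ.filter (fun e : Sub L => c ≤ e),
          (-1 : ℤ) ^ ((e.1 \ c.1).card) := by
  refine Finset.sum_bij'
    (fun g hg => (⟨c.1 ∪ Finset.univ.biUnion g,
      chain_union hmono hc (fun i => Fintype.mem_piFinset.1 hg i)⟩ : Sub L))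
    (fun e _ => fun i : Fin r => e.1.filter (fun x => f i.castSucc < x ∧ x < f i.succ))
    ?_ ?_ ?_ ?_ ?_
  · intro g hg
    simp only [Finset.mem_filter, Finset.mem_univ, true_and]
    exact Finset.le_iff_subset.2 Finset.subset_union_left
  · intro e _
    exact Fintype.mem_piFinset.2 (fun i => gdef_mem hmono e i)
  · intro g hg
    funext i
    ext x
    simp only [Finset.mem_filter, Finset.mem_union, Finset.mem_biUnion, Finset.mem_univ,
      true_and]
    constructor
    · rintro ⟨hx | ⟨i', hi'⟩, h1, h2⟩
      · exact absurd hx (not_in_c hmono hc h1 h2)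
      · rcases eq_or_ne i' i with rfl | hne
        · exact hi'
        · have hb := (mem_oc.1 (Fintype.mem_piFinset.1 hg i')).1 x hi'
          exact absurd (interval_disj hmono hne hb.1 hb.2 h1 h2) (fun h => h)
    · intro hx
      have hb := (mem_oc.1 (Fintype.mem_piFinset.1 hg i)).1 x hx
      exact ⟨Or.inr ⟨i, hx⟩, hb.1, hb.2⟩
  · intro e he
    simp only [Finset.mem_filter, Finset.mem_univ, true_and] at he
    exact Subtype.ext (recover hmono hf0 hfr hc e (Finset.le_iff_subset.1 he))
  · intro g hg
    have hg' : ∀ i, g i ∈ oc (f i.castSucc) (f i.succ) := Fintype.mem_piFinset.1 hg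
    have hdisj : Disjoint c.1 (Finset.univ.biUnion g) := by
      rw [Finset.disjoint_right]
      intro a ha hac
      simp only [Finset.mem_biUnion, Finset.mem_univ, true_and] at ha
      obtain ⟨i, hi⟩ := ha
      have hb := (mem_oc.1 (hg' i)).1 a hi
      exact not_in_c hmono hc hb.1 hb.2 hac
    have hsd : (c.1 ∪ Finset.univ.biUnion g) \ c.1 = Finset.univ.biUnion g :=
      Finset.union_sdiff_cancel_left hdisj
    have hcard : (Finset.univ.biUnion g).card = ∑ i : Fin r, (g i).card := by
      refine Finset.card_biUnion ?_
      intro i _ i' _ hne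
      rw [Function.onFun, Finset.disjoint_left]
      intro a hai hai'
      have h1 := (mem_oc.1 (hg' i)).1 a hai
      have h2 := (mem_oc.1 (hg' i')).1 a hai'
      exact interval_disj hmono hne h1.1 h1.2 h2.1 h2.2
    simp only
    rw [hsd, hcard, Finset.prod_pow_eq_pow_sum]


lemma mu_top (μC : ChainLat L → ChainLat L → ℤ)
    (hC1 : ∀ x : ChainLat L, μC x x = 1)
    (hCrec : ∀ x z : ChainLat L, x < z →
      ∑ y ∈ Finset.univ.filter (fun y : ChainLat L => x ≤ y ∧ y ≤ z), μC x y = 0)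
    (c : Sub L) :
    -μC (WithTop.some c) ⊤
      = ∑ e ∈ Finset.univ.filter (fun e : Sub L => c ≤ e),
          (-1 : ℤ) ^ ((e.1 \ c.1).card) := by
  have h0 := hCrec (WithTop.some c) ⊤ (WithTop.coe_lt_top c)
  have hTmem : (⊤ : ChainLat L) ∈ Finset.univ.filter
      (fun y : ChainLat L => WithTop.some c ≤ y ∧ y ≤ ⊤) := by simp
  rw [← Finset.add_sum_erase _ _ hTmem] at h0
  have hset : (Finset.univ.filter
        (fun y : ChainLat L => WithTop.some c ≤ y ∧ y ≤ ⊤)).erase ⊤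
      = Finset.image WithTop.some (Finset.univ.filter (fun e : Sub L => c ≤ e)) := by
    ext y
    simp only [Finset.mem_erase, Finset.mem_filter, Finset.mem_univ, true_and,
      Finset.mem_image]
    constructor
    · rintro ⟨hne, h1, -⟩
      obtain ⟨e, rfl⟩ := WithTop.ne_top_iff_exists.1 hne
      exact ⟨e, WithTop.coe_le_coe.1 h1, rfl⟩
    · rintro ⟨e, h1, rfl⟩
      exact ⟨WithTop.coe_ne_top, WithTop.coe_le_coe.2 h1, le_top⟩
  rw [hset, Finset.sum_image (fun x _ y _ h => WithTop.coe_injective h)] at h0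
  have hcg : ∑ e ∈ Finset.univ.filter (fun e : Sub L => c ≤ e),
        μC (WithTop.some c) (WithTop.some e)
      = ∑ e ∈ Finset.univ.filter (fun e : Sub L => c ≤ e),
          (-1 : ℤ) ^ ((e.1 \ c.1).card) := by
    refine Finset.sum_congr rfl ?_
    intro e he
    simp only [Finset.mem_filter, Finset.mem_univ, true_and] at he
    exact bool_mu μC hC1 hCrec c _ e (Finset.le_iff_subset.1 he) rfl
  rw [hcg] at h0
  linarith

end

/-- Let `L` be a finite lattice with Möbius function `μL`, and let `μC` be the Möbius
function of the chain lattice of `L`.  For any chain `⊥ = C₀ < C₁ < … < C_r = ⊤`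
(encoded by a strictly monotone `f : Fin (r+1) → L`), one has
`-μC(C_•, ⊤) = Π_{i=1}^{r} (-μL(C_{i-1}, C_i))`. -/
theorem mu_chain_lattice_prod {L : Type} [Fintype L] [Lattice L] [BoundedOrder L]
    (μL : L → L → ℤ)
    (hL1 : ∀ x : L, μL x x = 1)
    (hLrec : ∀ x z : L, x < z →
      ∑ y ∈ Finset.univ.filter (fun y : L => x ≤ y ∧ y ≤ z), μL x y = 0)
    (μC : ChainLat L → ChainLat L → ℤ)
    (hC1 : ∀ x : ChainLat L, μC x x = 1)
    (hCrec : ∀ x z : ChainLat L, x < z →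
      ∑ y ∈ Finset.univ.filter (fun y : ChainLat L => x ≤ y ∧ y ≤ z), μC x y = 0)
    (r : ℕ) (hr : 0 < r) (f : Fin (r + 1) → L)
    (hmono : StrictMono f) (hf0 : f 0 = ⊥) (hfr : f (Fin.last r) = ⊤)
    (c : {c : Finset L // IsFullChain c})
    (hc : (c : Finset L) = Finset.image f Finset.univ) :
    -μC (WithTop.some c) ⊤
      = ∏ i : Fin r, (-μL (f i.castSucc) (f i.succ)) := by
  have hA := mu_top μC hC1 hCrec c
  have hHall : ∀ i : Fin r,
      ∑ S ∈ oc (f i.castSucc) (f i.succ), (-1 : ℤ) ^ S.card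
        = -μL (f i.castSucc) (f i.succ) :=
    fun i => hall μL hL1 hLrec _ _ (hmono (Fin.castSucc_lt_succ (i := i)))
  rw [hA, ← stepB hmono hf0 hfr hc]
  rw [show ∏ i : Fin r, (-μL (f i.castSucc) (f i.succ))
      = ∏ i : Fin r, ∑ S ∈ oc (f i.castSucc) (f i.succ), (-1 : ℤ) ^ S.card from
    Finset.prod_congr rfl (fun i _ => (hHall i).symm)]
  rw [Finset.prod_univ_sum]

end Stmt12
end

section
/- Let L be a finite lattice and cl: L → L a closure operator: cl is idempotent (cl(cl(A)) = cl(A)), increasing (A ≤ cl(A)), and order-preserving (A ≤ B implies cl(A) ≤ cl(B)). Let F = {A ∈ L : cl(A) = A} be the sublattice of closed elements. Then for any A ≤ B in L with cl(B) = B: Σ_{X ∈ L, A ≤ X, cl(X) = B} μ_L(A, X) = 0 if cl(A) ≠ A, and equals μ_F(A, B) if cl(A) = A, where μ_F is the Möbius function of the poset F. -/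
open scoped Classical

namespace Stmt14

/-- Crapo's closure theorem: let `L` be a finite lattice with Möbius function `μL`,
`cl` a closure operator on `L` with closed elements `F = {A | cl A = A}`, and `μF`
the Möbius function of the subposet `F`.  Then for `A ≤ B` with `B` closed,
`Σ_{X ∈ L, A ≤ X, cl X = B} μL(A, X)` equals `μF(A, B)` if `A` is closed,
and `0` otherwise. -/
theorem crapo_closure {L : Type} [Fintype L] [Lattice L]
    (μL : L → L → ℤ)
    (hL1 : ∀ x : L, μL x x = 1)
    (hLrec : ∀ x z : L, x < z →
      ∑ y ∈ Finset.univ.filter (fun y : L => x ≤ y ∧ y ≤ z), μL x y = 0)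
    (cl : L → L)
    (hidem : ∀ A : L, cl (cl A) = cl A)
    (hincr : ∀ A : L, A ≤ cl A)
    (hmono : ∀ A B : L, A ≤ B → cl A ≤ cl B)
    (μF : L → L → ℤ)
    (hF1 : ∀ x : L, cl x = x → μF x x = 1)
    (hFrec : ∀ x z : L, cl x = x → cl z = z → x < z →
      ∑ y ∈ Finset.univ.filter (fun y : L => cl y = y ∧ x ≤ y ∧ y ≤ z), μF x y = 0)
    (A B : L) (hAB : A ≤ B) (hB : cl B = B) :
    ∑ X ∈ Finset.univ.filter (fun X : L => A ≤ X ∧ cl X = B), μL A X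
      = if cl A = A then μF A B else 0 := by
  set g : L → ℤ := fun C => ∑ X ∈ Finset.univ.filter (fun X : L => A ≤ X ∧ cl X = C), μL A X
    with hg
  set tgt : L → ℤ := fun C => if cl A = A then μF A C else 0 with htgt
  have main : ∀ B : L, cl B = B → A ≤ B → g B = tgt B := by
    intro B
    induction B using WellFoundedLT.induction with
    | _ B IH =>
    intro hB hAB
    set S : Finset L := Finset.univ.filter (fun C : L => cl C = C ∧ A ≤ C ∧ C ≤ B) with hS
    have hBS : B ∈ S := by
      rw [hS, Finset.mem_filter]
      exact ⟨Finset.mem_univ _, hB, hAB, le_refl _⟩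
    -- the total sum over closed C in [A,B] of g equals sum over the whole interval
    have hswap : ∑ C ∈ S, g C
        = ∑ X ∈ Finset.univ.filter (fun X : L => A ≤ X ∧ X ≤ B), μL A X := by
      have hmaps : ∀ X ∈ Finset.univ.filter (fun X : L => A ≤ X ∧ X ≤ B), cl X ∈ S := by
        intro X hX
        simp only [Finset.mem_filter, Finset.mem_univ, true_and] at hX
        rw [hS, Finset.mem_filter]
        exact ⟨Finset.mem_univ _, hidem X, le_trans hX.1 (hincr X), hB ▸ hmono X B hX.2⟩
      rw [← Finset.sum_fiberwise_of_maps_to hmaps (μL A)]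
      apply Finset.sum_congr rfl
      intro C hC
      simp only [hS, Finset.mem_filter, Finset.mem_univ, true_and] at hC
      have hset : (Finset.univ.filter (fun X : L => A ≤ X ∧ X ≤ B)).filter
          (fun X : L => cl X = C) = Finset.univ.filter (fun X : L => A ≤ X ∧ cl X = C) := by
        ext X
        simp only [Finset.mem_filter, Finset.mem_univ, true_and]
        constructor
        · rintro ⟨⟨h1, h2⟩, h3⟩
          exact ⟨h1, h3⟩
        · rintro ⟨h1, h2⟩
          exact ⟨⟨h1, le_trans (h2 ▸ hincr X) hC.2.2⟩, h2⟩
      simp only [hg]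
      rw [← hset]
    have htot : ∑ X ∈ Finset.univ.filter (fun X : L => A ≤ X ∧ X ≤ B), μL A X
        = if A = B then 1 else 0 := by
      rcases eq_or_lt_of_le hAB with h | h
      · subst h
        rw [if_pos rfl]
        have : Finset.univ.filter (fun X : L => A ≤ X ∧ X ≤ A) = {A} := by
          ext X
          simp only [Finset.mem_filter, Finset.mem_univ, true_and, Finset.mem_singleton]
          constructor
          · rintro ⟨h1, h2⟩; exact le_antisymm h2 h1
          · rintro rfl; exact ⟨le_refl _, le_refl _⟩
        rw [this, Finset.sum_singleton, hL1]
      · rw [if_neg (ne_of_lt h)]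
        exact hLrec A B h
    have htotF : ∑ C ∈ S, tgt C = if A = B then 1 else 0 := by
      by_cases hA : cl A = A
      · have : ∀ C ∈ S, tgt C = μF A C := fun C _ => by simp [htgt, hA]
        rw [Finset.sum_congr rfl this]
        rcases eq_or_lt_of_le hAB with h | h
        · subst h
          rw [if_pos rfl]
          have hSA : S = {A} := by
            ext C
            simp only [hS, Finset.mem_filter, Finset.mem_univ, true_and,
              Finset.mem_singleton]
            constructor
            · rintro ⟨_, h1, h2⟩; exact le_antisymm h2 h1
            · rintro rfl; exact ⟨hA, le_refl _, le_refl _⟩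
          rw [hSA, Finset.sum_singleton, hF1 A hA]
        · rw [if_neg (ne_of_lt h)]
          exact hFrec A B hA hB h
      · have : ∀ C ∈ S, tgt C = 0 := fun C _ => by simp [htgt, hA]
        rw [Finset.sum_congr rfl this, Finset.sum_const_zero]
        have : A ≠ B := fun h => hA (h ▸ hB)
        rw [if_neg this]
    have herase : ∑ C ∈ S.erase B, g C = ∑ C ∈ S.erase B, tgt C := by
      apply Finset.sum_congr rfl
      intro C hC
      have hCB : C ≠ B := Finset.ne_of_mem_erase hC
      have hC' := Finset.mem_of_mem_erase hC
      simp only [hS, Finset.mem_filter, Finset.mem_univ, true_and] at hC'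
      exact IH C (lt_of_le_of_ne hC'.2.2 hCB) hC'.1 hC'.2.1
    have h1 : g B + ∑ C ∈ S.erase B, g C = ∑ C ∈ S, g C :=
      Finset.add_sum_erase S g hBS
    have h2 : tgt B + ∑ C ∈ S.erase B, tgt C = ∑ C ∈ S, tgt C :=
      Finset.add_sum_erase S tgt hBS
    have : g B + ∑ C ∈ S.erase B, g C = tgt B + ∑ C ∈ S.erase B, g C := by
      rw [h1, hswap, htot, ← htotF, ← h2, herase]
    exact add_right_cancel this
  exact main B hB hAB

end Stmt14
end

section
/- For the uniform matroid U(n, r) with 1 ≤ r < n, the sum Σ_{A ⊆ [n]} (-1)^{ℓ(A)} β(A) rk(A) over all subsets A of the ground set equals n - r(n - r), where rk(A) = min(|A|, r), ℓ(A) = |A| - rk(A), and β(A) = binom(|A|-2, r-1) if |A| > r, β(A) = 1 if |A| = 1, and β(A) = 0 if 2 ≤ |A| ≤ r or A = ∅. -/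
namespace Stmt16

open Finset

lemma lemH (s n : ℕ) (h : s < n) :
    ∑ j ∈ range (n - s + 1), (-1 : ℤ) ^ j * (n.choose (s + j)) * ((s + j).choose s) = 0 := by
  have key : ∀ j ∈ range (n - s + 1),
      (-1 : ℤ) ^ j * (n.choose (s + j)) * ((s + j).choose s)
        = (n.choose s : ℤ) * ((-1) ^ j * ((n - s).choose j)) := by
    intro j hj
    rw [mem_range] at hj
    have h1 : s + j ≤ n := by omega
    have := Nat.choose_mul (n := n) (Nat.le_add_right s j)
    have h2 : s + j - s = j := by omega
    rw [h2] at this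
    have this' : ((n.choose (s + j) : ℤ) * ((s + j).choose s)) = (n.choose s : ℤ) * ((n - s).choose j) := by
      exact_mod_cast congrArg (Nat.cast : ℕ → ℤ) this
    linear_combination ((-1 : ℤ) ^ j) * this'
  rw [Finset.sum_congr rfl key, ← Finset.mul_sum,
    Int.alternating_sum_range_choose_of_ne (by omega : n - s ≠ 0), mul_zero]

lemma lemG (s n : ℕ) (h : s + 1 ≤ n) :
    ∑ j ∈ range (n - s), (-1 : ℤ) ^ j * (n.choose (s + 1 + j)) * ((s + j).choose s) = 1 := by
  induction n, h using Nat.le_induction with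
  | base => simp [Nat.sub_self, show s + 1 - s = 1 by omega]
  | succ n hn ih =>
    have hr : n + 1 - s = (n - s) + 1 := by omega
    rw [hr]
    have step : ∀ j ∈ range (n - s + 1),
        (-1 : ℤ) ^ j * ((n+1).choose (s + 1 + j)) * ((s + j).choose s)
          = (-1 : ℤ) ^ j * (n.choose (s + j)) * ((s + j).choose s)
            + (-1 : ℤ) ^ j * (n.choose (s + 1 + j)) * ((s + j).choose s) := by
      intro j _
      have : (n+1).choose (s + 1 + j) = n.choose (s + j) + n.choose (s + j + 1) := by
        have := Nat.choose_succ_succ n (s + j)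
        rwa [show s + 1 + j = (s + j) + 1 by omega]
      rw [this, show s + j + 1 = s + 1 + j by omega]
      push_cast; ring
    rw [Finset.sum_congr rfl step, Finset.sum_add_distrib, lemH s n (by omega),
      Finset.sum_range_succ, show s + 1 + (n - s) = n + 1 by omega,
      Nat.choose_succ_self, zero_add]
    simp [ih]

lemma lemF (s n : ℕ) (h : s + 2 ≤ n) :
    ∑ j ∈ range (n - s - 1), (-1 : ℤ) ^ j * (n.choose (s + 2 + j)) * ((s + j).choose s)
      = (n : ℤ) - s - 1 := by
  induction n, h using Nat.le_induction with
  | base =>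
    rw [show s + 2 - s - 1 = 1 by omega]
    simp
  | succ n hn ih =>
    have hr : n + 1 - s - 1 = (n - s - 1) + 1 := by omega
    rw [hr]
    have step : ∀ j ∈ range (n - s - 1 + 1),
        (-1 : ℤ) ^ j * ((n+1).choose (s + 2 + j)) * ((s + j).choose s)
          = (-1 : ℤ) ^ j * (n.choose (s + 1 + j)) * ((s + j).choose s)
            + (-1 : ℤ) ^ j * (n.choose (s + 2 + j)) * ((s + j).choose s) := by
      intro j _
      have : (n+1).choose (s + 2 + j) = n.choose (s + 1 + j) + n.choose (s + 1 + j + 1) := by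
        have := Nat.choose_succ_succ n (s + 1 + j)
        rwa [show s + 2 + j = (s + 1 + j) + 1 by omega]
      rw [this, show s + 1 + j + 1 = s + 2 + j by omega]
      push_cast; ring
    have hG : ∑ j ∈ range (n - s - 1 + 1),
        (-1 : ℤ) ^ j * (n.choose (s + 1 + j)) * ((s + j).choose s) = 1 := by
      have := lemG s n (by omega)
      rwa [show n - s = n - s - 1 + 1 by omega] at this
    rw [Finset.sum_congr rfl step, Finset.sum_add_distrib, hG,
      Finset.sum_range_succ, show s + 2 + (n - s - 1) = n + 1 by omega,
      Nat.choose_succ_self, ih]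
    push_cast; ring

/-- For the uniform matroid `U(n, r)` with `1 ≤ r < n`, where for `A ⊆ [n]` one has
`rk(A) = min(|A|, r)`, `ℓ(A) = |A| - rk(A)`, and the Crapo beta invariant of the
restriction to `A` is `C(|A|-2, r-1)` if `|A| > r`, `1` if `|A| = 1`, and `0`
otherwise, the sum `Σ_{A ⊆ [n]} (-1)^{ℓ(A)} β(A) rk(A)` equals `n - r(n-r)`. -/
theorem uniform_beta_rank_sum (n r : ℕ) (h1 : 1 ≤ r) (h2 : r < n) :
    ∑ A ∈ (Finset.univ : Finset (Fin n)).powerset,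
      (-1 : ℤ) ^ (A.card - min A.card r) *
        (if r < A.card then ((A.card - 2).choose (r - 1) : ℤ)
          else if A.card = 1 then 1 else 0) *
        (min A.card r : ℤ)
      = (n : ℤ) - (r : ℤ) * ((n : ℤ) - (r : ℤ)) := by
  obtain ⟨s, rfl⟩ : ∃ s, r = s + 1 := ⟨r - 1, by omega⟩
  rw [Finset.sum_powerset_apply_card
    (fun m => (-1 : ℤ) ^ (m - min m (s+1)) *
        (if s + 1 < m then ((m - 2).choose (s + 1 - 1) : ℤ)
          else if m = 1 then 1 else 0) * min (m : ℤ) ((s + 1 : ℕ) : ℤ))]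
  rw [Finset.card_univ, Fintype.card_fin]
  rw [show n + 1 = (s + 2) + (n - s - 1) by omega, Finset.sum_range_add]
  have hfirst : ∑ j ∈ range (s + 2), n.choose j •
      ((-1 : ℤ) ^ (j - min j (s+1)) *
        (if s + 1 < j then ((j - 2).choose (s + 1 - 1) : ℤ)
          else if j = 1 then 1 else 0) * min (j : ℤ) ((s + 1 : ℕ) : ℤ)) = n := by
    rw [Finset.sum_eq_single 1]
    · simp
    · intro b hb hb1
      rw [mem_range] at hb
      rw [if_neg (by omega), if_neg hb1]
      simp
    · intro h; exfalso; exact h (mem_range.mpr (by omega))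
  rw [hfirst]
  have hsecond : ∑ j ∈ range (n - s - 1), n.choose (s + 2 + j) •
      ((-1 : ℤ) ^ ((s + 2 + j) - min (s + 2 + j) (s+1)) *
        (if s + 1 < s + 2 + j then (((s + 2 + j) - 2).choose (s + 1 - 1) : ℤ)
          else if s + 2 + j = 1 then 1 else 0) * min ((s + 2 + j : ℕ) : ℤ) ((s + 1 : ℕ) : ℤ))
      = -((s : ℤ) + 1) * ((n : ℤ) - s - 1) := by
    have key : ∀ j ∈ range (n - s - 1), n.choose (s + 2 + j) •
        ((-1 : ℤ) ^ ((s + 2 + j) - min (s + 2 + j) (s+1)) *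
          (if s + 1 < s + 2 + j then (((s + 2 + j) - 2).choose (s + 1 - 1) : ℤ)
            else if s + 2 + j = 1 then 1 else 0) * min ((s + 2 + j : ℕ) : ℤ) ((s + 1 : ℕ) : ℤ))
        = -((s : ℤ) + 1) * ((-1 : ℤ) ^ j * (n.choose (s + 2 + j)) * ((s + j).choose s)) := by
      intro j _
      rw [if_pos (by omega), min_eq_right (by omega : s + 1 ≤ s + 2 + j), min_eq_right (by push_cast; omega : ((s + 1 : ℕ) : ℤ) ≤ ((s + 2 + j : ℕ) : ℤ)),
        show (s + 2 + j) - (s + 1) = j + 1 by omega,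
        show (s + 2 + j) - 2 = s + j by omega,
        show s + 1 - 1 = s by omega]
      push_cast [nsmul_eq_mul, pow_succ]
      ring
    rw [Finset.sum_congr rfl key, ← Finset.mul_sum, lemF s n (by omega)]
  rw [hsecond]
  push_cast; ring

end Stmt16
end

section
/- Suppose a sequence of polynomials g_n(t) ∈ ℤ[t] satisfies g₃(t) = t, g₄(t) = 2t + 2t² + t³, and for n ≥ 5 the recursion g_n(t) = (n-2+t(n-3)) g_{n-1}(t) + t(1+t) g'_{n-1}(t) + (1+t)(t-n+3) g_{n-2}(t). Writing g_n(t) = t Σ_i N_i(n) (1+t)^i, the coefficients satisfy N₀(n) = 1, N₁(n) = 0, N₂(n) = 1 if n is even and N₂(n) = 0 if n is odd, for all n ≥ 3 (with N_i(n) = 0 for i < 0 or i ≥ n-1). Moreover g'_n(0) = (n-2)!. -/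
namespace Stmt19

open Polynomial

lemma sumpow0 (m : ℕ) (hm : 1 ≤ m) (f : ℕ → ℤ) :
    ∑ x ∈ Finset.range m, f x * (0:ℤ) ^ x = f 0 := by
  rw [Finset.sum_eq_single 0]
  · simp
  · intro j hj hj0; simp [zero_pow hj0]
  · intro h; exact absurd (Finset.mem_range.2 (by omega)) h

lemma sumpow1 (m : ℕ) (hm : 2 ≤ m) (f : ℕ → ℤ) :
    ∑ x ∈ Finset.range m, f x * ((x:ℤ) * (0:ℤ) ^ (x - 1)) = f 1 := by
  rw [Finset.sum_eq_single 1]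
  · simp
  · intro j hj hj1
    match j, hj1 with
    | 0, _ => simp
    | (k+2), _ => simp [zero_pow]
  · intro h; exact absurd (Finset.mem_range.2 (by omega)) h

lemma sumpow2 (m : ℕ) (hm : 3 ≤ m) (f : ℕ → ℤ) :
    ∑ x ∈ Finset.range m, f x * ((x:ℤ) * (((x-1 : ℕ):ℤ) * (0:ℤ) ^ (x - 1 - 1))) = 2 * f 2 := by
  rw [Finset.sum_eq_single 2]
  · norm_num; ring
  · intro j hj hj1
    match j, hj1 with
    | 0, _ => simp
    | 1, _ => simp
    | (k+3), _ => simp [zero_pow]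
  · intro h; exact absurd (Finset.mem_range.2 (by omega)) h

lemma extract0 (m : ℕ) (hm : 1 ≤ m) (N : ℕ → ℤ) :
    (X * ∑ i ∈ Finset.range m, C (N i) * (1+X)^i).eval (-1) = -(N 0) := by
  simp only [eval_mul, eval_finset_sum, eval_pow, eval_add, eval_C, eval_X, eval_one]
  norm_num
  rw [sumpow0 m hm]

lemma extract1 (m : ℕ) (hm : 2 ≤ m) (N : ℕ → ℤ) :
    (derivative (X * ∑ i ∈ Finset.range m, C (N i) * (1+X)^i)).eval (-1) = N 0 - N 1 := by
  simp only [derivative_mul, derivative_X, derivative_sum, derivative_C, derivative_pow,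
    derivative_add, derivative_one, eval_add, eval_mul, eval_finset_sum, eval_pow, eval_C,
    eval_X, eval_one, eval_natCast]
  norm_num
  rw [sumpow0 m (by omega), sumpow1 m hm]
  ring

lemma extract2 (m : ℕ) (hm : 3 ≤ m) (N : ℕ → ℤ) :
    (derivative (derivative (X * ∑ i ∈ Finset.range m, C (N i) * (1+X)^i))).eval (-1)
      = 2 * N 1 - 2 * N 2 := by
  simp only [derivative_mul, derivative_X, derivative_sum, derivative_C, derivative_pow,
    derivative_add, derivative_one, eval_add, eval_mul, eval_finset_sum, eval_pow, eval_C,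
    eval_X, eval_one, eval_natCast]
  norm_num
  rw [sumpow1 m (by omega), sumpow2 m hm]
  ring

lemma key (g : ℕ → ℤ[X])
    (h3 : g 3 = X)
    (h4 : g 4 = 2 * X + 2 * X ^ 2 + X ^ 3)
    (hrec : ∀ n : ℕ, 5 ≤ n →
      g n = (Polynomial.C ((n : ℤ) - 2) + Polynomial.C ((n : ℤ) - 3) * X) * g (n - 1)
          + X * (1 + X) * Polynomial.derivative (g (n - 1))
          + (1 + X) * (X - Polynomial.C ((n : ℤ) - 3)) * g (n - 2))
    (hz : ∀ n : ℕ, 3 ≤ n → (g n).eval 0 = 0) :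
    ∀ n : ℕ, 3 ≤ n →
      (g n).eval (-1) = -1 ∧ (derivative (g n)).eval (-1) = 1 ∧
      (derivative (derivative (g n))).eval (-1) = -(1 + (-1)^n) ∧
      (derivative (g n)).eval 0 = ((n-2).factorial : ℤ) := by
  intro n
  induction n using Nat.strong_induction_on with
  | _ n ih =>
  intro hn
  match n, hn with
  | 3, _ =>
    refine ⟨?_, ?_, ?_, ?_⟩ <;> simp [h3, Nat.factorial]
  | 4, _ =>
    refine ⟨?_, ?_, ?_, ?_⟩ <;>
      (simp only [h4, derivative_add, derivative_mul, derivative_pow, derivative_X,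
        derivative_ofNat, eval_add, eval_mul, eval_pow, eval_X, eval_ofNat, eval_natCast,
        eval_zero, eval_one]
       norm_num [Nat.factorial])
  | (k+5), _ =>
    set n := k + 5 with hkn
    have hn5 : 5 ≤ n := by omega
    obtain ⟨a0, a1, a2, a3⟩ := ih (n-1) (by omega) (by omega)
    obtain ⟨b0, b1, b2, b3⟩ := ih (n-2) (by omega) (by omega)
    have h := hrec n hn5
    have hz1 := hz (n-1) (by omega)
    have hz2 := hz (n-2) (by omega)
    have hp1 : ((-1:ℤ))^n = -((-1)^(n-1)) := by
      conv_lhs => rw [show n = (n-1)+1 by omega]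
      rw [pow_succ]; ring
    have hp2 : ((-1:ℤ))^(n-1) = -((-1)^(n-2)) := by
      conv_lhs => rw [show n-1 = (n-2)+1 by omega]
      rw [pow_succ]; ring
    have e0 := congrArg (eval (-1)) h
    simp only [eval_add, eval_mul, eval_sub, eval_C, eval_X, eval_one] at e0
    rw [a0, a1, b0] at e0
    have e1 := congrArg (fun p => eval (-1) (derivative p)) h
    simp only [derivative_add, derivative_mul, derivative_C, derivative_X, derivative_one,
      derivative_sub, derivative_zero, eval_add, eval_mul, eval_sub, eval_C, eval_X,
      eval_one, eval_zero] at e1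
    rw [a0, a1, a2, b0, b1] at e1
    have e2 := congrArg (fun p => eval (-1) (derivative (derivative p))) h
    simp only [derivative_add, derivative_mul, derivative_C, derivative_X, derivative_one,
      derivative_sub, derivative_zero, eval_add, eval_mul, eval_sub, eval_C, eval_X,
      eval_one, eval_zero] at e2
    rw [a0, a1, a2, b0, b1, b2] at e2
    have e3 := congrArg (fun p => eval 0 (derivative p)) h
    simp only [derivative_add, derivative_mul, derivative_C, derivative_X, derivative_one,
      derivative_sub, derivative_zero, eval_add, eval_mul, eval_sub, eval_C, eval_X,
      eval_one, eval_zero] at e3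
    rw [hz1, hz2, a3, b3] at e3
    refine ⟨by rw [e0]; ring, by rw [e1]; ring, ?_, ?_⟩
    · rw [e2, hp2]; rw [hp1, hp2]; ring
    · rw [e3, show n-1-2 = n-3 by omega, show n-2-2 = n-4 by omega]
      have c4 : ((n-4 : ℕ) : ℤ) = (n:ℤ) - 4 := by omega
      have f1 : ((n-2).factorial : ℤ) = ((n:ℤ)-2) * (((n:ℤ)-3) * ((n-4).factorial : ℤ)) := by
        rw [show n-2 = (n-4)+1+1 by omega, Nat.factorial_succ, Nat.factorial_succ]
        push_cast [c4]; ring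
      have f2 : ((n-3).factorial : ℤ) = ((n:ℤ)-3) * ((n-4).factorial : ℤ) := by
        rw [show n-3 = (n-4)+1 by omega, Nat.factorial_succ]
        push_cast [c4]; ring
      rw [f1, f2]; ring

/-- Suppose `g : ℕ → ℤ[t]` satisfies `g₃ = t`, `g₄ = 2t + 2t² + t³`, and for `n ≥ 5`
the recursion
`g_n = (n-2 + t(n-3)) g_{n-1} + t(1+t) g'_{n-1} + (1+t)(t-n+3) g_{n-2}`.
Writing `g_n(t) = t Σ_{i < n-1} N_i(n) (1+t)^i` (with `N_i(n) = 0` for `i ≥ n-1`),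
then for all `n ≥ 3`: `N₀(n) = 1`, `N₁(n) = 0`, `N₂(n) = 1` if `n` is even and `0`
if `n` is odd, and `g'_n(0) = (n-2)!`. -/
theorem g_complete_graph_coeffs (g : ℕ → ℤ[X])
    (h3 : g 3 = X)
    (h4 : g 4 = 2 * X + 2 * X ^ 2 + X ^ 3)
    (hrec : ∀ n : ℕ, 5 ≤ n →
      g n = (Polynomial.C ((n : ℤ) - 2) + Polynomial.C ((n : ℤ) - 3) * X) * g (n - 1)
          + X * (1 + X) * Polynomial.derivative (g (n - 1))
          + (1 + X) * (X - Polynomial.C ((n : ℤ) - 3)) * g (n - 2))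
    (N : ℕ → ℕ → ℤ)
    (hN : ∀ n : ℕ, 3 ≤ n →
      g n = X * ∑ i ∈ Finset.range (n - 1), Polynomial.C (N n i) * (1 + X) ^ i)
    (hN0 : ∀ n : ℕ, 3 ≤ n → ∀ i : ℕ, n - 1 ≤ i → N n i = 0) :
    ∀ n : ℕ, 3 ≤ n →
      N n 0 = 1 ∧ N n 1 = 0 ∧ N n 2 = (if Even n then 1 else 0) ∧
        (Polynomial.derivative (g n)).eval 0 = ((n - 2).factorial : ℤ) := by
  have hz : ∀ n : ℕ, 3 ≤ n → (g n).eval 0 = 0 := by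
    intro n hn; rw [hN n hn]; simp
  intro n hn
  obtain ⟨e0, e1, e2, e3⟩ := key g h3 h4 hrec hz n hn
  rw [hN n hn] at e0 e1 e2
  rw [extract0 (n-1) (by omega) (N n)] at e0
  rw [extract1 (n-1) (by omega) (N n)] at e1
  have hN0n : N n 0 = 1 := by linarith
  have hN1n : N n 1 = 0 := by linarith
  refine ⟨hN0n, hN1n, ?_, e3⟩
  rcases Nat.lt_or_ge n 4 with h4' | h4'
  · have hn3 : n = 3 := by omega
    subst hn3
    rw [hN0 3 (by norm_num) 2 (by norm_num)]
    decide
  · rw [extract2 (n-1) (by omega) (N n)] at e2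
    rcases Nat.even_or_odd n with he | ho
    · rw [if_pos he]
      rw [he.neg_one_pow] at e2
      linarith
    · rw [if_neg (Nat.not_even_iff_odd.mpr ho)]
      rw [ho.neg_one_pow] at e2
      linarith

end Stmt19
end
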